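/- Let A and B be n×n nonnegative real matrices with the same sign pattern, i.e. for all i, j: A_{ij} = 0 if and only if B_{ij} = 0. Then A has Property 1 if and only if B has Property 1. -/

import Mathlib

open Matrix

/-- Spectral radius of a real square matrix: the maximum modulus of its complex
eigenvalues. -/
noncomputable def specRad {n : ℕ} (A : Matrix (Fin n) (Fin n) ℝ) : ℝ :=
  sSup {x : ℝ | ∃ μ ∈ spectrum ℂ (A.map Complex.ofReal), x = ‖μ‖}

/-- A nonnegative matrix is irreducible if for every pair (i,j) some power has a
positive (i,j) entry. -/
def MatIrred {n : ℕ} (A : Matrix (Fin n) (Fin n) ℝ) : Prop :=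
  ∀ i j : Fin n, ∃ m : ℕ, 0 < m ∧ 0 < (A ^ m) i j

/-- For a real diagonal matrix D = diag d, `expDiag d` is diag (exp d). -/
noncomputable def expDiag {n : ℕ} (d : Fin n → ℝ) : Matrix (Fin n) (Fin n) ℝ :=
  Matrix.diagonal fun i => Real.exp (d i)

/-- Property 1: equality in the log-convexity inequality forces C - D to be scalar. -/
def Property1 {n : ℕ} (A : Matrix (Fin n) (Fin n) ℝ) : Prop :=
  ∀ C D : Fin n → ℝ, ∀ t ∈ Set.Ioo (0:ℝ) 1,
    Real.log (specRad (expDiag (fun i => (1 - t) * C i + t * D i) * A)) =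
      (1 - t) * Real.log (specRad (expDiag C * A)) +
        t * Real.log (specRad (expDiag D * A)) →
    ∃ c : ℝ, ∀ i, C i - D i = c

/-!
If some proper nonempty set `S` of indices is closed for `A` (`A i j = 0` for `i ∈ S`, `j ∉ S`),
then `e^{s·1_S} A` is block triangular and `r(e^{s·1_S} A) = max (e^s r_S, r_{Sᶜ})`, where
`r_S`, `r_{Sᶜ}` are the spectral radii of the diagonal blocks. This is log-affine in `s` for
large `s`, so Property 1 fails; and the closed sets depend only on the sign pattern.

Otherwise `A` is irreducible. If `e^a`, `e^b` are Perron vectors of `e^C A`, `e^D A`, convexity of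
`exp` makes `e^{(1-t)a+tb}` subinvariant for `e^{(1-t)C+tD} A` with the factor
`r(e^C A)^{1-t} r(e^D A)^t`. Equality of spectral radii forces it to be an eigenvector, hence
equality in every convexity step: `C i - D i = c + ψ i - ψ j` on every edge `A i j > 0`.
Conversely, for such `d = C - D` the matrix `e^{s d} A` is diagonally similar to `e^{s c} A`, so
`log r` is affine along `s ↦ s d`. Thus for irreducible `A`, Property 1 says exactly that every
`d` cohomologous to a constant on the graph of `A` is constant: again a condition on the pattern.
-/

section Spectrum

variable {ι K : Type*} [Fintype ι] [DecidableEq ι] [Field K]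

theorem Matrix.mem_spectrum_iff_exists_mulVec_eq {M : Matrix ι ι K} {μ : K} :
    μ ∈ spectrum K M ↔ ∃ z ≠ 0, M *ᵥ z = μ • z := by
  rw [← spectrum_toLin', ← Module.End.hasEigenvalue_iff_mem_spectrum,
    Module.End.hasEigenvalue_iff, Submodule.ne_bot_iff]
  simp only [Module.End.mem_eigenspace_iff, toLin'_apply]
  exact ⟨fun ⟨z, hz, h0⟩ => ⟨z, h0, hz⟩, fun ⟨z, h0, hz⟩ => ⟨z, hz, h0⟩⟩

theorem Matrix.spectrum_transpose (M : Matrix ι ι K) : spectrum K Mᵀ = spectrum K M := by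
  ext μ
  rw [mem_spectrum_iff_isRoot_charpoly, mem_spectrum_iff_isRoot_charpoly, charpoly_transpose]

end Spectrum

namespace Matrix

variable {ι α K : Type*} [DecidableEq ι]

def restrictRows [Zero α] (S : Finset ι) (M : Matrix ι ι α) : Matrix ι ι α :=
  of fun i j => if i ∈ S then M i j else 0

theorem restrictRows_apply [Zero α] (S : Finset ι) (M : Matrix ι ι α) (i j : ι) :
    M.restrictRows S i j = if i ∈ S then M i j else 0 := rfl

variable [Fintype ι]

theorem restrictRows_mulVec_apply [NonUnitalNonAssocSemiring α] (S : Finset ι)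
    (M : Matrix ι ι α) (z : ι → α) (i : ι) :
    (M.restrictRows S *ᵥ z) i = if i ∈ S then (M *ᵥ z) i else 0 := by
  split_ifs with hi <;> simp [mulVec, dotProduct, restrictRows_apply, hi]

variable [Field K] {S : Finset ι} {M : Matrix ι ι K} {μ : K}

theorem mem_spectrum_restrictRows_or_compl (hS : ∀ i ∈ S, ∀ j ∉ S, M i j = 0)
    (hμ : μ ∈ spectrum K M) :
    μ ∈ spectrum K (M.restrictRows S) ∨ μ ∈ spectrum K (M.restrictRows Sᶜ) := by
  obtain ⟨z, hz0, hz⟩ := mem_spectrum_iff_exists_mulVec_eq.1 hμ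
  simp only [mem_spectrum_iff_exists_mulVec_eq]
  by_cases hzS : ∃ i ∈ S, z i ≠ 0
  · left
    obtain ⟨i₀, hi₀, hzi₀⟩ := hzS
    refine ⟨fun i => if i ∈ S then z i else 0, fun h => hzi₀ ?_, funext fun i => ?_⟩
    · simpa [hi₀] using congrFun h i₀
    rw [restrictRows_mulVec_apply]
    split_ifs with hi
    · rw [Pi.smul_apply, if_pos hi, ← Pi.smul_apply, ← hz]
      refine Finset.sum_congr rfl fun j _ => ?_
      by_cases hj : j ∈ S
      · simp [hj]
      · simp [hj, hS i hi j hj]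
    · simp [hi]
  · right
    push Not at hzS
    refine ⟨z, hz0, funext fun i => ?_⟩
    rw [restrictRows_mulVec_apply, hz]
    by_cases hi : i ∈ S
    · simp [hi, hzS i hi]
    · simp [hi]

theorem mem_spectrum_of_mem_spectrum_restrictRows (hS : ∀ i ∈ S, ∀ j ∉ S, M i j = 0)
    (hμ0 : μ ≠ 0) (hμ : μ ∈ spectrum K (M.restrictRows S)) : μ ∈ spectrum K M := by
  rw [← spectrum_transpose, mem_spectrum_iff_exists_mulVec_eq] at hμ ⊢
  obtain ⟨z, hz0, hz⟩ := hμ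
  rw [mulVec_transpose] at hz
  have hzSc : ∀ j ∉ S, z j = 0 := fun j hj => by
    have hj' := congrFun hz j
    simp only [vecMul, dotProduct, restrictRows_apply, Pi.smul_apply, smul_eq_mul] at hj'
    rw [Finset.sum_eq_zero fun i _ => by
      by_cases hi : i ∈ S
      · simp [hi, hS i hi j hj]
      · simp [hi]] at hj'
    exact (mul_eq_zero.1 hj'.symm).resolve_left hμ0
  refine ⟨z, hz0, ?_⟩
  rw [mulVec_transpose, ← hz]
  funext j
  refine Finset.sum_congr rfl fun i _ => ?_
  by_cases hi : i ∈ S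
  · simp [restrictRows_apply, hi]
  · simp [restrictRows_apply, hi, hzSc i hi]

theorem mem_spectrum_of_mem_spectrum_restrictRows_compl (hS : ∀ i ∈ S, ∀ j ∉ S, M i j = 0)
    (hμ0 : μ ≠ 0) (hμ : μ ∈ spectrum K (M.restrictRows Sᶜ)) : μ ∈ spectrum K M := by
  rw [mem_spectrum_iff_exists_mulVec_eq] at hμ ⊢
  obtain ⟨z, hz0, hz⟩ := hμ
  have hzS : ∀ i ∈ S, z i = 0 := fun i hi => by
    have hi' := congrFun hz i
    rw [restrictRows_mulVec_apply, if_neg (by simpa using hi), Pi.smul_apply, smul_eq_mul] at hi'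
    exact (mul_eq_zero.1 hi'.symm).resolve_left hμ0
  refine ⟨z, hz0, funext fun i => ?_⟩
  rw [← hz, restrictRows_mulVec_apply]
  by_cases hi : i ∈ S
  · rw [if_neg (by simpa using hi)]
    refine Finset.sum_eq_zero fun j _ => ?_
    by_cases hj : j ∈ S
    · simp [hzS j hj]
    · simp [hS i hi j hj]
  · rw [if_pos (by simpa using hi)]

end Matrix

section SpectralRadius

variable {n : ℕ}

theorem specRad_nonneg (M : Matrix (Fin n) (Fin n) ℝ) : 0 ≤ specRad M :=
  Real.sSup_nonneg <| by rintro x ⟨μ, -, rfl⟩; exact norm_nonneg μ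

theorem le_specRad {M : Matrix (Fin n) (Fin n) ℝ} {μ : ℂ}
    (hμ : μ ∈ spectrum ℂ (M.map Complex.ofReal)) : ‖μ‖ ≤ specRad M := by
  refine le_csSup ?_ ⟨μ, hμ, rfl⟩
  obtain ⟨a, ha⟩ := ((finite_spectrum (M.map Complex.ofReal)).image (‖·‖)).bddAbove
  exact ⟨a, by rintro x ⟨ν, hν, rfl⟩; exact ha ⟨ν, hν, rfl⟩⟩

theorem specRad_le {M : Matrix (Fin n) (Fin n) ℝ} {a : ℝ} (ha : 0 ≤ a)
    (h : ∀ μ ∈ spectrum ℂ (M.map Complex.ofReal), ‖μ‖ ≤ a) : specRad M ≤ a :=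
  Real.sSup_le (by rintro x ⟨μ, hμ, rfl⟩; exact h μ hμ) ha

open scoped Pointwise in
theorem specRad_smul {c : ℝ} (hc : 0 < c) (M : Matrix (Fin n) (Fin n) ℝ) :
    specRad (c • M) = c * specRad M := by
  set u : ℂˣ := Units.mk0 (c : ℂ) (by exact_mod_cast hc.ne')
  have hspec : spectrum ℂ ((c • M).map Complex.ofReal) =
      u • spectrum ℂ (M.map Complex.ofReal) := by
    rw [← spectrum.unit_smul_eq_smul]
    congr 1
    ext i j
    simp [u]
  have hnorm (ν : ℂ) : ‖u • ν‖ = c * ‖ν‖ := by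
    simp [u, Units.smul_def, abs_of_pos hc]
  refine le_antisymm (specRad_le (mul_nonneg hc.le (specRad_nonneg M)) fun μ hμ => ?_) ?_
  · obtain ⟨ν, hν, rfl⟩ := Set.mem_smul_set.1 (hspec ▸ hμ)
    rw [hnorm]
    exact mul_le_mul_of_nonneg_left (le_specRad hν) hc.le
  · rw [← le_div_iff₀' hc]
    refine specRad_le (div_nonneg (specRad_nonneg _) hc.le) fun ν hν => ?_
    rw [le_div_iff₀' hc, ← hnorm]
    exact le_specRad (hspec ▸ Set.smul_mem_smul_set hν)

theorem specRad_eq_max_of_closed {S : Finset (Fin n)} {M : Matrix (Fin n) (Fin n) ℝ}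
    (hS : ∀ i ∈ S, ∀ j ∉ S, M i j = 0) :
    specRad M = max (specRad (M.restrictRows S)) (specRad (M.restrictRows Sᶜ)) := by
  have hSC : ∀ i ∈ S, ∀ j ∉ S, M.map Complex.ofReal i j = 0 := fun i hi j hj => by
    simp [hS i hi j hj]
  have hmap (T : Finset (Fin n)) :
      (M.restrictRows T).map Complex.ofReal = (M.map Complex.ofReal).restrictRows T := by
    ext i j
    simp only [map_apply, restrictRows_apply]
    split_ifs <;> simp
  refine le_antisymm (specRad_le (le_max_of_le_left (specRad_nonneg _)) fun μ hμ => ?_) ?_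
  · rcases mem_spectrum_restrictRows_or_compl hSC hμ with h | h
    · exact le_max_of_le_left (le_specRad (hmap S ▸ h))
    · exact le_max_of_le_right (le_specRad (hmap Sᶜ ▸ h))
  · refine max_le (specRad_le (specRad_nonneg M) fun μ hμ => ?_)
      (specRad_le (specRad_nonneg M) fun μ hμ => ?_) <;>
      rcases eq_or_ne μ 0 with rfl | hμ0
    · simpa using specRad_nonneg M
    · exact le_specRad (mem_spectrum_of_mem_spectrum_restrictRows hSC hμ0 (hmap S ▸ hμ))
    · simpa using specRad_nonneg M
    · exact le_specRad
        (mem_spectrum_of_mem_spectrum_restrictRows_compl hSC hμ0 (hmap Sᶜ ▸ hμ))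

end SpectralRadius

namespace Matrix

variable {ι : Type*}

theorem IsIrreducible.of_pos_iff {R : Type*} [Ring R] [LinearOrder R]
    {A B : Matrix ι ι R} (hA : A.IsIrreducible) (hB : ∀ i j, 0 ≤ B i j)
    (h : ∀ i j, 0 < A i j ↔ 0 < B i j) : B.IsIrreducible := by
  have hQ : toQuiver A = toQuiver B := by simp only [toQuiver, h]
  exact ⟨hB, hQ ▸ hA.connected⟩

variable [Fintype ι]

theorem mulVec_apply_pos {P : Matrix ι ι ℝ} (hP : ∀ i j, 0 < P i j) {z : ι → ℝ}
    (hz : ∀ i, 0 ≤ z i) (hz0 : z ≠ 0) (i : ι) : 0 < (P *ᵥ z) i := by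
  obtain ⟨j, hj⟩ := Function.ne_iff.1 hz0
  exact Finset.sum_pos' (fun k _ => mul_nonneg (hP i k).le (hz k))
    ⟨j, Finset.mem_univ j, mul_pos (hP i j) ((hz j).lt_of_ne' hj)⟩

variable [DecidableEq ι] {M : Matrix ι ι ℝ}

theorem IsIrreducible.exists_apply_pos (hM : M.IsIrreducible) (i : ι) : ∃ j, 0 < M i j := by
  obtain ⟨k, hk, hpos⟩ := (isIrreducible_iff_exists_pow_pos hM.nonneg).1 hM i i
  obtain ⟨k, rfl⟩ := Nat.exists_eq_add_of_lt hk
  rw [pow_succ', mul_apply,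
    Finset.sum_pos_iff_of_nonneg fun j _ => mul_nonneg (hM.nonneg i j)
      (pow_apply_nonneg hM.nonneg _ j i)] at hpos
  obtain ⟨j, -, hj⟩ := hpos
  exact ⟨j, pos_of_mul_pos_left hj (pow_apply_nonneg hM.nonneg _ j i)⟩

theorem IsIrreducible.exists_sum_pow_pos (hM : M.IsIrreducible) :
    ∃ K, ∀ i j, 0 < (∑ m ∈ Finset.range K, M ^ m) i j := by
  choose k _ hk using (isIrreducible_iff_exists_pow_pos hM.nonneg).1 hM
  refine ⟨Finset.univ.sup (fun p : ι × ι => k p.1 p.2) + 1, fun i j => ?_⟩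
  rw [sum_apply]
  refine (hk i j).trans_le
    (Finset.single_le_sum (fun m _ => pow_apply_nonneg hM.nonneg m i j) ?_)
  exact Finset.mem_range_succ_iff.2
    (Finset.le_sup (f := fun p : ι × ι => k p.1 p.2) (Finset.mem_univ (i, j)))

theorem IsIrreducible.exists_pos_mulVec_eq_smul [Nonempty ι] (hM : M.IsIrreducible) :
    ∃ (r : ℝ) (u : ι → ℝ), (∀ i, 0 < u i) ∧ M *ᵥ u = r • u := by
  obtain ⟨K, hP⟩ := hM.exists_sum_pow_pos
  set P := ∑ m ∈ Finset.range K, M ^ m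
  have hMP : M * P = P * M := by
    simp only [P, Finset.mul_sum, Finset.sum_mul, ← pow_succ, ← pow_succ']
  have hPy : ∀ y ∈ stdSimplex ℝ ι, ∀ i, 0 < (P *ᵥ y) i := fun y hy =>
    mulVec_apply_pos hP hy.1 fun h => by simpa [h] using hy.2
  -- Collatz–Wielandt: `y` maximizes the least ratio `(M x)ᵢ / xᵢ` over `x = P y`. If `M x ≠ r x`,
  -- applying the positive matrix `P`, which commutes with `M`, makes every ratio larger than `r`.
  let F : (ι → ℝ) → ℝ := fun y =>
    Finset.univ.inf' Finset.univ_nonempty fun i => (M *ᵥ (P *ᵥ y)) i / (P *ᵥ y) i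
  have hF : ContinuousOn F (stdSimplex ℝ ι) := by
    refine ContinuousOn.finset_inf'_apply _ fun i _ =>
      ContinuousOn.div ?_ ?_ fun y hy => (hPy y hy i).ne'
    · exact ((continuous_apply i).comp (continuous_const.matrix_mulVec
        (continuous_const.matrix_mulVec continuous_id))).continuousOn
    · exact ((continuous_apply i).comp
        (continuous_const.matrix_mulVec continuous_id)).continuousOn
  obtain ⟨y, hy, hmax⟩ := (isCompact_stdSimplex ℝ ι).exists_isMaxOn
    ⟨_, single_mem_stdSimplex ℝ (Classical.arbitrary ι)⟩ hF
  set x := P *ᵥ y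
  have hx : ∀ i, 0 < x i := hPy y hy
  refine ⟨F y, x, hx, ?_⟩
  have hle : ∀ i, F y * x i ≤ (M *ᵥ x) i := fun i =>
    (le_div_iff₀ (hx i)).1 (Finset.inf'_le _ (Finset.mem_univ i))
  by_contra hne
  set z := M *ᵥ x - F y • x
  have hz : ∀ i, 0 ≤ z i := fun i => sub_nonneg.2 (hle i)
  have hMPx : M *ᵥ (P *ᵥ x) = F y • (P *ᵥ x) + P *ᵥ z := by
    rw [mulVec_mulVec, hMP, ← mulVec_mulVec, ← mulVec_smul, ← mulVec_add, add_sub_cancel]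
  set s := ∑ i, x i
  have hs : 0 < s := Finset.sum_pos (fun i _ => hx i) Finset.univ_nonempty
  have hy' : s⁻¹ • x ∈ stdSimplex ℝ ι :=
    ⟨fun i => mul_nonneg (inv_nonneg.2 hs.le) (hx i).le, by
      simp only [Pi.smul_apply, smul_eq_mul, ← Finset.mul_sum]
      exact inv_mul_cancel₀ hs.ne'⟩
  have hlt : F y < F (s⁻¹ • x) := by
    refine (Finset.lt_inf'_iff _).2 fun i _ => ?_
    have hPx := mulVec_apply_pos hP (fun j => (hx j).le)
      (Function.ne_iff.2 ⟨_, (hx (Classical.arbitrary ι)).ne'⟩) i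
    rw [mulVec_smul, mulVec_smul, Pi.smul_apply, Pi.smul_apply, smul_eq_mul, smul_eq_mul,
      mul_div_mul_left _ _ (inv_ne_zero hs.ne'), hMPx, lt_div_iff₀ hPx]
    simp only [Pi.add_apply, Pi.smul_apply, smul_eq_mul, lt_add_iff_pos_right]
    exact mulVec_apply_pos hP hz (sub_ne_zero.2 hne) i
  exact (hmax hy').not_gt hlt

end Matrix

section Perron

variable {n : ℕ} {M : Matrix (Fin n) (Fin n) ℝ}

theorem norm_le_of_mem_spectrum_of_vecMul_eq (hM : ∀ i j, 0 ≤ M i j) {v : Fin n → ℝ} {s : ℝ}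
    (hv : ∀ i, 0 < v i) (hvM : v ᵥ* M = s • v) {μ : ℂ}
    (hμ : μ ∈ spectrum ℂ (M.map Complex.ofReal)) : ‖μ‖ ≤ s := by
  obtain ⟨z, hz0, hz⟩ := mem_spectrum_iff_exists_mulVec_eq.1 hμ
  set a : Fin n → ℝ := fun i => ‖z i‖
  have hMa : ∀ i, ‖μ‖ * a i ≤ (M *ᵥ a) i := fun i => by
    calc ‖μ‖ * a i = ‖∑ j, (M i j : ℂ) * z j‖ := by
          rw [← norm_mul, ← smul_eq_mul, ← Pi.smul_apply, ← hz]; rfl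
      _ ≤ ∑ j, ‖(M i j : ℂ) * z j‖ := norm_sum_le _ _
      _ = (M *ᵥ a) i := by simp [mulVec, dotProduct, a, abs_of_nonneg (hM i _)]
  obtain ⟨j, hj⟩ := Function.ne_iff.1 hz0
  have hva : 0 < v ⬝ᵥ a := Finset.sum_pos' (fun i _ => mul_nonneg (hv i).le (norm_nonneg _))
    ⟨j, Finset.mem_univ j, mul_pos (hv j) (norm_pos_iff.2 hj)⟩
  refine le_of_mul_le_mul_right ?_ hva
  calc ‖μ‖ * (v ⬝ᵥ a) = v ⬝ᵥ (‖μ‖ • a) := by rw [dotProduct_smul, smul_eq_mul]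
    _ ≤ v ⬝ᵥ (M *ᵥ a) :=
      Finset.sum_le_sum fun i _ => mul_le_mul_of_nonneg_left (hMa i) (hv i).le
    _ = s * (v ⬝ᵥ a) := by rw [dotProduct_mulVec, hvM, smul_dotProduct, smul_eq_mul]

variable [Nonempty (Fin n)]

theorem eq_of_mulVec_eq_of_vecMul_eq {u v : Fin n → ℝ} {r s : ℝ}
    (hu : ∀ i, 0 < u i) (hv : ∀ i, 0 < v i) (hMu : M *ᵥ u = r • u) (hvM : v ᵥ* M = s • v) :
    r = s := by
  have hvu : 0 < v ⬝ᵥ u :=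
    Finset.sum_pos (fun i _ => mul_pos (hv i) (hu i)) Finset.univ_nonempty
  refine mul_right_cancel₀ hvu.ne' ?_
  rw [← smul_eq_mul, ← dotProduct_smul, ← hMu, dotProduct_mulVec, hvM, smul_dotProduct,
    smul_eq_mul]

theorem specRad_eq_of_mulVec_eq_of_vecMul_eq (hM : ∀ i j, 0 ≤ M i j)
    {u v : Fin n → ℝ} {r s : ℝ} (hu : ∀ i, 0 < u i) (hv : ∀ i, 0 < v i)
    (hMu : M *ᵥ u = r • u) (hvM : v ᵥ* M = s • v) : specRad M = r := by
  obtain rfl := eq_of_mulVec_eq_of_vecMul_eq hu hv hMu hvM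
  obtain i := Classical.arbitrary (Fin n)
  have hr : 0 ≤ r := by
    have h : (M *ᵥ u) i = r * u i := by rw [hMu]; rfl
    refine nonneg_of_mul_nonneg_left (h ▸ ?_) (hu i)
    exact Finset.sum_nonneg (s := Finset.univ) fun j _ => mul_nonneg (hM i j) (hu j).le
  refine le_antisymm (specRad_le hr fun μ => norm_le_of_mem_spectrum_of_vecMul_eq hM hv hvM) ?_
  have hmem : (r : ℂ) ∈ spectrum ℂ (M.map Complex.ofReal) := by
    refine mem_spectrum_iff_exists_mulVec_eq.2
      ⟨fun i => u i, fun h => (hu i).ne' (by simpa using congrFun h i), funext fun i => ?_⟩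
    have h := congrFun hMu i
    simp only [mulVec, dotProduct, map_apply, Pi.smul_apply, smul_eq_mul] at h ⊢
    exact_mod_cast h
  simpa [abs_of_nonneg hr] using le_specRad hmem

theorem Matrix.IsIrreducible.exists_perron (hM : M.IsIrreducible) :
    ∃ u v : Fin n → ℝ, (∀ i, 0 < u i) ∧ (∀ i, 0 < v i) ∧
      M *ᵥ u = specRad M • u ∧ v ᵥ* M = specRad M • v := by
  obtain ⟨r, u, hu, hMu⟩ := hM.exists_pos_mulVec_eq_smul
  obtain ⟨s, v, hv, hvM⟩ := hM.transpose.exists_pos_mulVec_eq_smul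
  rw [mulVec_transpose] at hvM
  have hrs := eq_of_mulVec_eq_of_vecMul_eq hu hv hMu hvM
  have hr := specRad_eq_of_mulVec_eq_of_vecMul_eq hM.nonneg hu hv hMu hvM
  exact ⟨u, v, hu, hv, hr ▸ hMu, hr ▸ hrs ▸ hvM⟩

theorem Matrix.IsIrreducible.specRad_pos (hM : M.IsIrreducible) : 0 < specRad M := by
  obtain ⟨u, -, hu, -, hMu, -⟩ := hM.exists_perron
  obtain i := Classical.arbitrary (Fin n)
  obtain ⟨j, hj⟩ := hM.exists_apply_pos i
  have h := congrFun hMu i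
  rw [Pi.smul_apply, smul_eq_mul] at h
  refine pos_of_mul_pos_left (h ▸ ?_) (hu i).le
  exact Finset.sum_pos' (fun k _ => mul_nonneg (hM.nonneg i k) (hu k).le)
    ⟨j, Finset.mem_univ j, mul_pos hj (hu j)⟩

theorem Matrix.IsIrreducible.eq_specRad_of_mulVec_eq (hM : M.IsIrreducible) {w : Fin n → ℝ}
    (hw : ∀ i, 0 < w i) {r : ℝ} (hMw : M *ᵥ w = r • w) : r = specRad M := by
  obtain ⟨-, v, -, hv, -, hvM⟩ := hM.exists_perron
  exact eq_of_mulVec_eq_of_vecMul_eq hw hv hMw hvM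

theorem Matrix.IsIrreducible.mulVec_eq_of_mulVec_le (hM : M.IsIrreducible) {w : Fin n → ℝ}
    (hMw : ∀ i, (M *ᵥ w) i ≤ specRad M * w i) : M *ᵥ w = specRad M • w := by
  obtain ⟨-, v, -, hv, -, hvM⟩ := hM.exists_perron
  have hsum : ∑ i, v i * (specRad M * w i - (M *ᵥ w) i) = 0 := by
    have h : v ⬝ᵥ (M *ᵥ w) = specRad M * (v ⬝ᵥ w) := by
      rw [dotProduct_mulVec, hvM, smul_dotProduct, smul_eq_mul]
    simp only [mul_sub, Finset.sum_sub_distrib, mul_left_comm _ (specRad M), ← Finset.mul_sum]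
    exact sub_eq_zero.2 h.symm
  funext i
  have hi := (Finset.sum_eq_zero_iff_of_nonneg fun i _ =>
    mul_nonneg (hv i).le (sub_nonneg.2 (hMw i))).1 hsum i (Finset.mem_univ i)
  rw [Pi.smul_apply, smul_eq_mul]
  linarith [(mul_eq_zero.1 hi).resolve_left (hv i).ne']

end Perron

section ExpConvexity

open Real

variable {t : ℝ}

theorem mul_exp_convex_comb_le {b : ℝ} (hb : 0 ≤ b) (x y : ℝ) (ht : t ∈ Set.Ioo (0 : ℝ) 1) :
    b * exp ((1 - t) * x + t * y) ≤ (1 - t) * (b * exp x) + t * (b * exp y) := by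
  have h := convexOn_exp.2 (Set.mem_univ x) (Set.mem_univ y) (by linarith [ht.2]) ht.1.le
    (sub_add_cancel 1 t)
  simp only [smul_eq_mul] at h
  nlinarith [mul_le_mul_of_nonneg_left h hb]

theorem mul_exp_convex_comb_lt {b : ℝ} (hb : 0 < b) {x y : ℝ} (hxy : x ≠ y)
    (ht : t ∈ Set.Ioo (0 : ℝ) 1) :
    b * exp ((1 - t) * x + t * y) < (1 - t) * (b * exp x) + t * (b * exp y) := by
  have h := strictConvexOn_exp.2 (Set.mem_univ x) (Set.mem_univ y) hxy (by linarith [ht.2])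
    ht.1 (sub_add_cancel 1 t)
  simp only [smul_eq_mul] at h
  nlinarith [mul_lt_mul_of_pos_left h hb]

variable {ι : Type*} [Fintype ι] {b : ι → ℝ}

theorem sum_mul_exp_convex_comb_le (hb : ∀ j, 0 ≤ b j) (x y : ι → ℝ)
    (ht : t ∈ Set.Ioo (0 : ℝ) 1) :
    ∑ j, b j * exp ((1 - t) * x j + t * y j) ≤
      (1 - t) * ∑ j, b j * exp (x j) + t * ∑ j, b j * exp (y j) := by
  rw [Finset.mul_sum, Finset.mul_sum, ← Finset.sum_add_distrib]
  exact Finset.sum_le_sum fun j _ => mul_exp_convex_comb_le (hb j) _ _ ht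

theorem eq_of_sum_mul_exp_convex_comb_eq (hb : ∀ j, 0 ≤ b j) {x y : ι → ℝ}
    (ht : t ∈ Set.Ioo (0 : ℝ) 1)
    (h : ∑ j, b j * exp ((1 - t) * x j + t * y j) =
      (1 - t) * ∑ j, b j * exp (x j) + t * ∑ j, b j * exp (y j))
    {j : ι} (hj : 0 < b j) : x j = y j := by
  by_contra hxy
  refine h.not_lt ?_
  rw [Finset.mul_sum, Finset.mul_sum, ← Finset.sum_add_distrib]
  exact Finset.sum_lt_sum (fun k _ => mul_exp_convex_comb_le (hb k) _ _ ht)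
    ⟨j, Finset.mem_univ j, mul_exp_convex_comb_lt hj hxy ht⟩

end ExpConvexity

section ExpDiag

open Real

variable {n : ℕ}

theorem expDiag_mul_apply (d : Fin n → ℝ) (M : Matrix (Fin n) (Fin n) ℝ) (i j : Fin n) :
    (expDiag d * M) i j = exp (d i) * M i j := by
  rw [expDiag, diagonal_mul]

theorem expDiag_mul_mulVec_exp_apply (d a : Fin n → ℝ) (M : Matrix (Fin n) (Fin n) ℝ) (r : ℝ)
    (i : Fin n) : ((expDiag d * M) *ᵥ fun j => exp (a j)) i =
      exp r * exp (a i) * ∑ j, M i j * exp (d i + a j - a i - r) := by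
  simp only [mulVec, dotProduct, expDiag_mul_apply, Finset.mul_sum]
  refine Finset.sum_congr rfl fun j _ => ?_
  rw [mul_left_comm, ← exp_add, mul_comm (exp _) (M i j), mul_assoc, ← exp_add, ← exp_add]
  ring_nf

theorem Matrix.IsIrreducible.expDiag_mul {M : Matrix (Fin n) (Fin n) ℝ} (hM : M.IsIrreducible)
    (d : Fin n → ℝ) : (expDiag d * M).IsIrreducible :=
  hM.of_pos_iff (fun i j => by
      rw [expDiag_mul_apply]; exact mul_nonneg (exp_pos _).le (hM.nonneg i j))
    fun i j => by rw [expDiag_mul_apply, mul_pos_iff_of_pos_left (exp_pos _)]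

end ExpDiag

def CohomologousToConst {ι : Type*} (A : Matrix ι ι ℝ) (d : ι → ℝ) : Prop :=
  ∃ (c : ℝ) (ψ : ι → ℝ), ∀ i j, 0 < A i j → d i = c + ψ i - ψ j

section Property1

open Real

variable {n : ℕ} {A : Matrix (Fin n) (Fin n) ℝ}

theorem property1_of_subsingleton [Subsingleton (Fin n)] (A : Matrix (Fin n) (Fin n) ℝ) :
    Property1 A := by
  intro C D _ _ _
  rcases isEmpty_or_nonempty (Fin n) with h | ⟨⟨i₀⟩⟩
  · exact ⟨0, isEmptyElim⟩
  · exact ⟨C i₀ - D i₀, fun i => by rw [Subsingleton.elim i i₀]⟩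

theorem not_property1_of_specRad_expDiag_smul_eq {d : Fin n → ℝ} (hd : ¬∃ c, ∀ i, d i = c)
    {T α ρ : ℝ} (h : ∀ s ≥ T, specRad (expDiag (s • d) * A) = exp (α * s) * ρ) :
    ¬Property1 A := by
  intro hA
  have hmid : (fun i => (1 - 1 / 2 : ℝ) * ((T + 1) • d) i + 1 / 2 * (T • d) i) =
      (T + 1 / 2) • d := by
    funext i
    simp only [Pi.smul_apply, smul_eq_mul]
    ring
  obtain ⟨c, hc⟩ := hA ((T + 1) • d) (T • d) (1 / 2) ⟨by norm_num, by norm_num⟩ (by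
    rw [hmid, h _ (by linarith), h _ (by linarith), h T le_rfl]
    rcases eq_or_ne ρ 0 with rfl | hρ
    · simp
    · simp only [log_mul (exp_pos _).ne' hρ, log_exp]
      ring)
  refine hd ⟨c, fun i => ?_⟩
  have hci := hc i
  simp only [Pi.smul_apply, smul_eq_mul] at hci
  linarith

theorem not_property1_of_closed {S : Finset (Fin n)} (hS : S.Nonempty) (hSc : Sᶜ.Nonempty)
    (hA : ∀ i ∈ S, ∀ j ∉ S, A i j = 0) : ¬Property1 A := by
  set d : Fin n → ℝ := fun i => if i ∈ S then 1 else 0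
  have hd : ¬∃ c, ∀ i, d i = c := by
    rintro ⟨c, hc⟩
    obtain ⟨i, hi⟩ := hS
    obtain ⟨j, hj⟩ := hSc
    have h := (hc i).trans (hc j).symm
    simp [d, hi, Finset.mem_compl.1 hj] at h
  have hspec (s : ℝ) : specRad (expDiag (s • d) * A) =
      max (exp s * specRad (A.restrictRows S)) (specRad (A.restrictRows Sᶜ)) := by
    have hY : (expDiag (s • d) * A).restrictRows S = exp s • A.restrictRows S := by
      ext i j
      by_cases hi : i ∈ S <;> simp [restrictRows_apply, expDiag_mul_apply, d, hi]
    have hZ : (expDiag (s • d) * A).restrictRows Sᶜ = A.restrictRows Sᶜ := by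
      ext i j
      by_cases hi : i ∈ S <;> simp [restrictRows_apply, expDiag_mul_apply, d, hi]
    rw [specRad_eq_max_of_closed fun i hi j hj => by
        rw [expDiag_mul_apply, hA i hi j hj, mul_zero],
      hY, hZ, specRad_smul (exp_pos s)]
  have hY0 := specRad_nonneg (A.restrictRows S)
  have hZ0 := specRad_nonneg (A.restrictRows Sᶜ)
  generalize specRad (A.restrictRows S) = ρY, specRad (A.restrictRows Sᶜ) = ρZ at hspec hY0 hZ0
  rcases hY0.eq_or_lt with hY | hY
  · refine not_property1_of_specRad_expDiag_smul_eq hd (T := 0) (α := 0) (ρ := ρZ) fun s _ => ?_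
    rw [hspec, ← hY, mul_zero, max_eq_right hZ0, zero_mul, exp_zero, one_mul]
  · refine not_property1_of_specRad_expDiag_smul_eq hd (T := ρZ / ρY) (α := 1) (ρ := ρY)
      fun s hs => ?_
    rw [hspec, one_mul, max_eq_left]
    calc ρZ = ρZ / ρY * ρY := (div_mul_cancel₀ _ hY.ne').symm
      _ ≤ (s + 1) * ρY := by gcongr; linarith
      _ ≤ exp s * ρY := by gcongr; exact add_one_le_exp s

end Property1

section Irreducible

open Real

variable {n : ℕ} [Nonempty (Fin n)] {A : Matrix (Fin n) (Fin n) ℝ}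

theorem Matrix.IsIrreducible.specRad_expDiag_mul (hA : A.IsIrreducible) {d ψ : Fin n → ℝ}
    {c : ℝ} (h : ∀ i j, 0 < A i j → d i = c + ψ i - ψ j) :
    specRad (expDiag d * A) = exp c * specRad A := by
  obtain ⟨u, -, hu, -, hAu, -⟩ := hA.exists_perron
  refine ((hA.expDiag_mul d).eq_specRad_of_mulVec_eq (w := fun i => exp (ψ i) * u i)
    (fun i => by have := hu i; positivity) (funext fun i => ?_)).symm
  have hi : ∑ j, A i j * u j = specRad A * u i := congrFun hAu i
  simp only [mulVec, dotProduct, expDiag_mul_apply, Pi.smul_apply, smul_eq_mul]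
  calc ∑ j, exp (d i) * A i j * (exp (ψ j) * u j) = exp (c + ψ i) * ∑ j, A i j * u j := by
        rw [Finset.mul_sum]
        refine Finset.sum_congr rfl fun j _ => ?_
        rcases (hA.nonneg i j).eq_or_lt with hij | hij
        · simp [← hij]
        · rw [← show d i + ψ j = c + ψ i by rw [h i j hij]; ring, exp_add]
          ring
    _ = exp c * specRad A * (exp (ψ i) * u i) := by rw [hi, exp_add]; ring

theorem Matrix.IsIrreducible.exists_sum_mul_exp_eq_one (hA : A.IsIrreducible) (d : Fin n → ℝ) :
    ∃ a : Fin n → ℝ, ∀ i,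
      ∑ j, A i j * exp (d i + a j - a i - log (specRad (expDiag d * A))) = 1 := by
  obtain ⟨u, -, hu, -, hMu, -⟩ := (hA.expDiag_mul d).exists_perron
  have hρ := (hA.expDiag_mul d).specRad_pos
  refine ⟨fun i => log (u i), fun i => ?_⟩
  rw [show u = fun j => exp (log (u j)) from funext fun j => (exp_log (hu j)).symm] at hMu
  have h := congrFun hMu i
  rw [expDiag_mul_mulVec_exp_apply _ _ _ (log (specRad (expDiag d * A))), exp_log hρ,
    Pi.smul_apply, smul_eq_mul] at h
  exact mul_left_cancel₀ (by positivity) (h.trans (mul_one _).symm)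

theorem Matrix.IsIrreducible.cohomologousToConst_of_log_specRad_eq (hA : A.IsIrreducible)
    {C D : Fin n → ℝ} {t : ℝ} (ht : t ∈ Set.Ioo (0 : ℝ) 1)
    (heq : log (specRad (expDiag (fun i => (1 - t) * C i + t * D i) * A)) =
      (1 - t) * log (specRad (expDiag C * A)) + t * log (specRad (expDiag D * A))) :
    CohomologousToConst A (C - D) := by
  obtain ⟨a, ha⟩ := hA.exists_sum_mul_exp_eq_one C
  obtain ⟨b, hb⟩ := hA.exists_sum_mul_exp_eq_one D
  set E := fun i => (1 - t) * C i + t * D i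
  set lC := log (specRad (expDiag C * A))
  set lD := log (specRad (expDiag D * A))
  set l := (1 - t) * lC + t * lD
  set c := fun i => (1 - t) * a i + t * b i
  have hcomb (i j : Fin n) : (1 - t) * (C i + a j - a i - lC) + t * (D i + b j - b i - lD) =
      E i + c j - c i - l := by
    simp only [E, c, l]
    ring
  have hconv (i : Fin n) := sum_mul_exp_convex_comb_le (hA.nonneg i)
    (fun j => C i + a j - a i - lC) (fun j => D i + b j - b i - lD) ht
  simp only [hcomb, ha, hb, mul_one, sub_add_cancel] at hconv
  have hρ : specRad (expDiag E * A) = exp l := by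
    rw [← heq, exp_log (hA.expDiag_mul E).specRad_pos]
  have hMw := (hA.expDiag_mul E).mulVec_eq_of_mulVec_le (w := fun j => exp (c j)) fun i => by
    rw [expDiag_mul_mulVec_exp_apply _ _ _ l, hρ]
    exact mul_le_of_le_one_right (by positivity) (hconv i)
  have hrow (i : Fin n) : ∑ j, A i j * exp (E i + c j - c i - l) = 1 := by
    have h := congrFun hMw i
    rw [expDiag_mul_mulVec_exp_apply _ _ _ l, hρ, Pi.smul_apply, smul_eq_mul] at h
    exact mul_left_cancel₀ (by positivity) (h.trans (mul_one _).symm)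
  refine ⟨lC - lD, a - b, fun i j hij => ?_⟩
  have h := eq_of_sum_mul_exp_convex_comb_eq (hA.nonneg i)
    (x := fun j => C i + a j - a i - lC) (y := fun j => D i + b j - b i - lD) ht
    (by simp only [hcomb, hrow, ha, hb]; ring) hij
  simp only [Pi.sub_apply]
  linarith

theorem Matrix.IsIrreducible.property1_iff (hA : A.IsIrreducible) :
    Property1 A ↔ ∀ d, CohomologousToConst A d → ∃ c, ∀ i, d i = c := by
  refine ⟨fun hP d ⟨c, ψ, h⟩ => ?_, fun h C D t ht heq => ?_⟩
  · by_contra hd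
    refine not_property1_of_specRad_expDiag_smul_eq hd (T := 0) (α := c) (ρ := specRad A)
      (fun s _ => ?_) hP
    rw [hA.specRad_expDiag_mul (ψ := s • ψ) (c := s * c) fun i j hij => ?_, mul_comm c]
    simp only [Pi.smul_apply, smul_eq_mul, h i j hij]
    ring
  · exact h _ (hA.cohomologousToConst_of_log_specRad_eq ht heq)

end Irreducible

theorem Matrix.exists_closed_of_not_isIrreducible {ι : Type*} [Fintype ι] [DecidableEq ι]
    [Nontrivial ι] {A : Matrix ι ι ℝ} (hA : ∀ i j, 0 ≤ A i j) (h : ¬A.IsIrreducible) :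
    ∃ S : Finset ι, S.Nonempty ∧ Sᶜ.Nonempty ∧ ∀ i ∈ S, ∀ j ∉ S, A i j = 0 := by
  classical
  rw [isIrreducible_iff_exists_pow_pos hA] at h
  push Not at h
  obtain ⟨i, j, hij⟩ := h
  set S := Finset.univ.filter fun k => ∃ m > 0, 0 < (A ^ m) i k
  have hjS : j ∉ S := by simpa [S] using hij
  have hclosed : ∀ k ∈ S, ∀ l ∉ S, A k l = 0 := fun k hk l hl => by
    obtain ⟨m, hm, hmk⟩ := (Finset.mem_filter.1 hk).2
    refine le_antisymm (not_lt.1 fun hkl => hl (Finset.mem_filter.2 ⟨Finset.mem_univ l,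
      m + 1, m.succ_pos, ?_⟩)) (hA k l)
    rw [pow_succ, mul_apply]
    exact (mul_pos hmk hkl).trans_le (Finset.single_le_sum
      (fun x _ => mul_nonneg (pow_apply_nonneg hA m i x) (hA x l)) (Finset.mem_univ k))
  rcases S.eq_empty_or_nonempty with hempty | hne
  · obtain ⟨i', hi'⟩ := exists_ne i
    refine ⟨{i}, Finset.singleton_nonempty i, ⟨i', by simpa using hi'⟩, fun k hk l _ => ?_⟩
    rw [Finset.mem_singleton.1 hk]
    refine le_antisymm (not_lt.1 fun hil => Finset.notMem_empty l ?_) (hA i l)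
    exact hempty ▸ Finset.mem_filter.2 ⟨Finset.mem_univ l, 1, one_pos, by simpa⟩
  · exact ⟨S, hne, ⟨j, Finset.mem_compl.2 hjS⟩, hclosed⟩

theorem stmt5 {n : ℕ} (A B : Matrix (Fin n) (Fin n) ℝ)
    (hA : ∀ i j, 0 ≤ A i j) (hB : ∀ i j, 0 ≤ B i j)
    (hsign : ∀ i j, A i j = 0 ↔ B i j = 0) :
    Property1 A ↔ Property1 B := by
  rcases subsingleton_or_nontrivial (Fin n) with hn | hn
  · exact iff_of_true (property1_of_subsingleton A) (property1_of_subsingleton B)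
  have hpos : ∀ i j, 0 < A i j ↔ 0 < B i j := fun i j => by
    rw [(hA i j).lt_iff_ne', (hB i j).lt_iff_ne', ne_eq, ne_eq, hsign]
  by_cases hirr : A.IsIrreducible
  · rw [hirr.property1_iff, (hirr.of_pos_iff hB hpos).property1_iff]
    simp only [CohomologousToConst, hpos]
  · obtain ⟨S, hS, hSc, hclosed⟩ := Matrix.exists_closed_of_not_isIrreducible hA hirr
    exact iff_of_false (not_property1_of_closed hS hSc hclosed)
      (not_property1_of_closed hS hSc fun i hi j hj => (hsign i j).1 (hclosed i hi j hj))
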